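/- arXiv:2509.13582 — 2 statements merged into one kernel-verified Lean document; each statement's English description precedes it below -/
import Mathlib

section
/- Let K : Ω × Ω → ℝ be a symmetric positive semidefinite kernel on a compact Ω ⊂ ℝᵈ satisfying |K(x,x) − K(x,y)| ≤ L‖x−y‖, and let z₁,…,zₙ be pivots chosen by complete pivoting (zₖ maximizes R_{k−1}(x,x) over x ∈ Ω). Then ‖Rₙ‖_∞ ≤ 4L · min_{1≤i<j≤n} ‖zᵢ − zⱼ‖, where ‖Rₙ‖_∞ = sup_{x,y} |Rₙ(x,y)|. -/
/-- A kernel `K` on a set `Ω` is symmetric positive semidefinite if it is symmetric on `Ω`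
and every finite kernel matrix formed from points of `Ω` is positive semidefinite. -/
def IsPSDKernel {E : Type*} (Ω : Set E) (K : E → E → ℝ) : Prop :=
  (∀ x ∈ Ω, ∀ y ∈ Ω, K x y = K y x) ∧
  ∀ (n : ℕ) (p : Fin n → E), (∀ i, p i ∈ Ω) →
    ∀ c : Fin n → ℝ, 0 ≤ ∑ i, ∑ j, c i * c j * K (p i) (p j)

/-- One pivoted Cholesky step at pivot `z`. -/
noncomputable def cholStep {E : Type*} (R : E → E → ℝ) (z : E) : E → E → ℝ :=
  fun x y => R x y - R x z * R z y / R z z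

/-- The residual of the pivoted Cholesky algorithm after successively pivoting at the
points of the list `zs` (in order). -/
noncomputable def cholResid {E : Type*} (K : E → E → ℝ) (zs : List E) : E → E → ℝ :=
  zs.foldl cholStep K

/-!
Every pivoted Cholesky step subtracts a square divided by `R z z ≥ 0` from both the diagonal
`R x x` and the kernel distance `R x x - 2 R x y + R y y`, and keeps the residual positive
semidefinite, so both quantities only decrease along the algorithm. Once `zᵢ` has been
pivoted its row of the residual vanishes, so for `i < j` the pivot value `R_j(zⱼ, zⱼ)` is the kernel
distance of `zᵢ, zⱼ` in `R_j`, hence at most their kernel distance in `K`, which the Lipschitz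
condition bounds by `2L‖zᵢ - zⱼ‖`. Complete pivoting makes `R_j(zⱼ, zⱼ)` dominate the diagonal of
`R_j`, hence of `R_n`, and `|R_n(x, y)| ≤ (R_n(x, x) + R_n(y, y)) / 2` since `R_n` is PSD.
-/

section CholeskyResidual

variable {E : Type*} {S : Set E} {R : E → E → ℝ} {x y z : E}

/-- The squared distance `‖R(x, ·) - R(y, ·)‖²` in the reproducing kernel Hilbert space of `R`. -/
def kernelSqDist (R : E → E → ℝ) (x y : E) : ℝ := R x x - 2 * R x y + R y y

theorem IsPSDKernel.apply_self_nonneg (hR : IsPSDKernel S R) (hx : x ∈ S) : 0 ≤ R x x := by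
  simpa using hR.2 1 (fun _ => x) (fun _ => hx) (fun _ => 1)

theorem IsPSDKernel.abs_apply_le (hR : IsPSDKernel S R) (hx : x ∈ S) (hy : y ∈ S) :
    |R x y| ≤ (R x x + R y y) / 2 := by
  have hpair (c : Fin 2 → ℝ) := hR.2 2 ![x, y] (by simp [Fin.forall_fin_two, hx, hy]) c
  have hplus := hpair ![1, 1]
  have hminus := hpair ![1, -1]
  simp only [Fin.sum_univ_two, Matrix.cons_val_zero, Matrix.cons_val_one, Matrix.cons_val_fin_one,
    mul_one, one_mul, mul_neg, neg_mul, neg_neg] at hplus hminus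
  rw [hR.1 y hy x hx] at hplus hminus
  exact abs_le.2 ⟨by linarith, by linarith⟩

theorem sum_sum_snoc (R : E → E → ℝ) {m : ℕ} (p : Fin m → E) (c : Fin m → ℝ) (z : E) (t : ℝ) :
    ∑ i, ∑ j, Fin.snoc (α := fun _ => ℝ) c t i * Fin.snoc (α := fun _ => ℝ) c t j *
        R (Fin.snoc (α := fun _ => E) p z i) (Fin.snoc (α := fun _ => E) p z j) =
      ∑ i, ∑ j, c i * c j * R (p i) (p j) + t * ∑ i, c i * R (p i) z +
        t * ∑ j, c j * R z (p j) + t ^ 2 * R z z := by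
  simp only [Fin.sum_univ_castSucc, Fin.snoc_castSucc, Fin.snoc_last, Finset.sum_add_distrib,
    Finset.mul_sum]
  ring_nf

theorem isPSDKernel_cholStep (hR : IsPSDKernel S R) (hz : z ∈ S) :
    IsPSDKernel S (cholStep R z) := by
  refine ⟨fun x hx y hy => ?_, fun m p hp c => ?_⟩
  · simp only [cholStep, hR.1 x hx y hy, hR.1 x hx z hz, hR.1 z hz y hy]
    ring
  have hschur : ∑ i, ∑ j, c i * c j * cholStep R z (p i) (p j) =
      ∑ i, ∑ j, c i * c j * R (p i) (p j) -
        (∑ i, c i * R (p i) z) * (∑ j, c j * R z (p j)) / R z z := by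
    simp only [cholStep, mul_sub, Finset.sum_sub_distrib, Finset.sum_mul_sum, Finset.sum_div]
    congr! 3
    ring
  have hsymm : ∑ j, c j * R z (p j) = ∑ i, c i * R (p i) z := by
    simp only [hR.1 z hz _ (hp _)]
  set s := ∑ i, c i * R (p i) z
  -- Schur complement: the form of `cholStep R z` at `c` is that of `R` at `c` extended by
  -- the weight `-s / R z z` at the point `z`.
  have hext := hR.2 (m + 1) (Fin.snoc p z) (Fin.lastCases (by simpa) (by simpa))
    (Fin.snoc c (-(s / R z z)))
  rw [sum_sum_snoc, hsymm] at hext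
  rw [hschur, hsymm]
  rcases eq_or_ne (R z z) 0 with h | h
  · simpa [h] using hext
  · convert hext using 1
    field_simp
    ring
theorem IsPSDKernel.cholStep_apply_self_le (hR : IsPSDKernel S R) (hz : z ∈ S) (hx : x ∈ S) :
    cholStep R z x x ≤ R x x := by
  have hcorr : 0 ≤ R x z * R z x / R z z := by
    rw [hR.1 z hz x hx]
    exact div_nonneg (mul_self_nonneg _) (hR.apply_self_nonneg hz)
  simp only [cholStep]
  linarith

theorem IsPSDKernel.kernelSqDist_cholStep_le (hR : IsPSDKernel S R) (hz : z ∈ S) (hx : x ∈ S)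
    (hy : y ∈ S) : kernelSqDist (cholStep R z) x y ≤ kernelSqDist R x y := by
  have hcorr : kernelSqDist (cholStep R z) x y =
      kernelSqDist R x y - (R x z - R y z) ^ 2 / R z z := by
    simp only [kernelSqDist, cholStep, hR.1 z hz x hx, hR.1 z hz y hy]
    ring
  rw [hcorr]
  have := div_nonneg (sq_nonneg (R x z - R y z)) (hR.apply_self_nonneg hz)
  linarith

theorem cholStep_pivot_apply (hz : R z z ≠ 0) (w : E) : cholStep R z z w = 0 := by
  simp only [cholStep]
  field_simp
  ring

theorem cholResid_cons (l : List E) : cholResid R (z :: l) = cholResid (cholStep R z) l := rfl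

theorem cholResid_append (l₁ l₂ : List E) :
    cholResid R (l₁ ++ l₂) = cholResid (cholResid R l₁) l₂ :=
  List.foldl_append

theorem isPSDKernel_cholResid {l : List E} (hR : IsPSDKernel S R) (hl : ∀ z ∈ l, z ∈ S) :
    IsPSDKernel S (cholResid R l) := by
  induction l generalizing R with
  | nil => exact hR
  | cons z l ih =>
    simp only [List.forall_mem_cons] at hl
    exact ih (isPSDKernel_cholStep hR hl.1) hl.2

theorem IsPSDKernel.cholResid_apply_self_le {l : List E} (hR : IsPSDKernel S R)
    (hl : ∀ z ∈ l, z ∈ S) (hx : x ∈ S) : cholResid R l x x ≤ R x x := by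
  induction l generalizing R with
  | nil => exact le_rfl
  | cons z l ih =>
    simp only [List.forall_mem_cons] at hl
    exact (ih (isPSDKernel_cholStep hR hl.1) hl.2).trans (hR.cholStep_apply_self_le hl.1 hx)

theorem IsPSDKernel.kernelSqDist_cholResid_le {l : List E} (hR : IsPSDKernel S R)
    (hl : ∀ z ∈ l, z ∈ S) (hx : x ∈ S) (hy : y ∈ S) :
    kernelSqDist (cholResid R l) x y ≤ kernelSqDist R x y := by
  induction l generalizing R with
  | nil => exact le_rfl
  | cons z l ih =>
    simp only [List.forall_mem_cons] at hl
    exact (ih (isPSDKernel_cholStep hR hl.1) hl.2).trans (hR.kernelSqDist_cholStep_le hl.1 hx hy)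

theorem cholResid_apply_eq_zero {l : List E} (hx : ∀ w, R x w = 0) (w : E) :
    cholResid R l x w = 0 := by
  induction l generalizing R with
  | nil => exact hx w
  | cons z l ih => exact ih fun w => by simp [cholStep, hx]

theorem cholResid_pivot_apply {l₁ l₂ : List E} (hz : cholResid R l₁ z z ≠ 0) (w : E) :
    cholResid R (l₁ ++ z :: l₂) z w = 0 := by
  rw [cholResid_append, cholResid_cons]
  exact cholResid_apply_eq_zero (cholStep_pivot_apply hz) w

theorem IsPSDKernel.cholResid_apply_self_le_kernelSqDist {l₁ l₂ : List E} (hR : IsPSDKernel S R)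
    (hl : ∀ w ∈ l₁ ++ z :: l₂, w ∈ S) (hx : x ∈ S) (hz : cholResid R l₁ z z ≠ 0) :
    cholResid R (l₁ ++ z :: l₂) x x ≤ kernelSqDist R z x := by
  have hrow := cholResid_pivot_apply (l₂ := l₂) hz
  calc cholResid R (l₁ ++ z :: l₂) x x = kernelSqDist (cholResid R (l₁ ++ z :: l₂)) z x := by
        simp only [kernelSqDist, hrow]; ring
    _ ≤ kernelSqDist R z x := hR.kernelSqDist_cholResid_le hl (hl z (by simp)) hx

theorem IsPSDKernel.cholResid_apply_self_le_take {l : List E} (hR : IsPSDKernel S R)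
    (hl : ∀ z ∈ l, z ∈ S) (hx : x ∈ S) (k : ℕ) :
    cholResid R l x x ≤ cholResid R (l.take k) x x := by
  conv_lhs => rw [← List.take_append_drop k l, cholResid_append]
  exact (isPSDKernel_cholResid hR fun z hz => hl z (List.mem_of_mem_take hz)).cholResid_apply_self_le
    (fun z hz => hl z (List.mem_of_mem_drop hz)) hx

theorem kernelSqDist_le_of_abs_sub_le {F : Type*} [SeminormedAddCommGroup F] {K : F → F → ℝ}
    {u v : F} {L : ℝ} (hsymm : K v u = K u v) (hu : |K u u - K u v| ≤ L * ‖u - v‖)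
    (hv : |K v v - K v u| ≤ L * ‖v - u‖) : kernelSqDist K u v ≤ 2 * L * ‖u - v‖ := by
  rw [norm_sub_rev] at hv
  simp only [kernelSqDist]
  linarith [le_abs_self (K u u - K u v), le_abs_self (K v v - K v u)]

theorem List.ofFn_take_eq_take_append_cons {α : Type*} {n : ℕ} (f : Fin n → α) {i : Fin n} {k : ℕ}
    (hik : (i : ℕ) < k) :
    (List.ofFn f).take k = (List.ofFn f).take i ++ f i :: ((List.ofFn f).take k).drop (i + 1) := by
  conv_lhs => rw [← List.take_append_drop i ((List.ofFn f).take k),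
    List.drop_eq_getElem_cons (by simp; omega)]
  simp [List.take_take, hik.le]

end CholeskyResidual

theorem complete_pivoting_residual_le_min_pivot_distance_general {d n : ℕ}
    (Ω : Set (EuclideanSpace ℝ (Fin d)))
    (K : EuclideanSpace ℝ (Fin d) → EuclideanSpace ℝ (Fin d) → ℝ)
    (hK : IsPSDKernel Ω K) (L : ℝ)
    (hLip : ∀ x ∈ Ω, ∀ y ∈ Ω, |K x x - K x y| ≤ L * ‖x - y‖)
    (z : Fin n → EuclideanSpace ℝ (Fin d)) (hzΩ : ∀ i, z i ∈ Ω)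
    -- well-definedness: each selected pivot has a positive diagonal residual
    (hwd : ∀ k : Fin n,
      0 < cholResid K ((List.ofFn z).take k) (z k) (z k))
    -- complete pivoting: `z k` maximizes the diagonal of the current residual over `Ω`
    (hcp : ∀ k : Fin n, ∀ x ∈ Ω,
      cholResid K ((List.ofFn z).take k) x x ≤
        cholResid K ((List.ofFn z).take k) (z k) (z k)) :
    ∀ x ∈ Ω, ∀ y ∈ Ω, ∀ i j : Fin n, i ≠ j →
      |cholResid K (List.ofFn z) x y| ≤ 4 * L * ‖z i - z j‖ := by
  intro x hx y hy i j hij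
  wlog hlt : i < j generalizing i j
  · rw [norm_sub_rev]
    exact this j i hij.symm (hij.symm.lt_of_le (not_lt.1 hlt))
  have hl : ∀ w ∈ List.ofFn z, w ∈ Ω := by simpa [List.mem_ofFn] using hzΩ
  have hdiag : ∀ w ∈ Ω, cholResid K (List.ofFn z) w w ≤
      cholResid K ((List.ofFn z).take j) (z j) (z j) := fun w hw =>
    (hK.cholResid_apply_self_le_take hl hw j).trans (hcp j w hw)
  have hpivot : cholResid K ((List.ofFn z).take j) (z j) (z j) ≤ kernelSqDist K (z i) (z j) := by
    rw [List.ofFn_take_eq_take_append_cons z hlt]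
    refine hK.cholResid_apply_self_le_kernelSqDist ?_ (hzΩ j) (hwd i).ne'
    rw [← List.ofFn_take_eq_take_append_cons z hlt]
    exact fun w hw => hl w (List.mem_of_mem_take hw)
  have hdist : kernelSqDist K (z i) (z j) ≤ 2 * L * ‖z i - z j‖ :=
    kernelSqDist_le_of_abs_sub_le (hK.1 _ (hzΩ j) _ (hzΩ i)) (hLip _ (hzΩ i) _ (hzΩ j))
      (hLip _ (hzΩ j) _ (hzΩ i))
  have hresid := (isPSDKernel_cholResid hK hl).abs_apply_le hx hy
  -- the chain starts at `0 ≤ |·|`, so `2 * L * ‖z i - z j‖ ≥ 0` and doubling it is harmless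
  linarith [hdiag x hx, hdiag y hy, abs_nonneg (cholResid K (List.ofFn z) x y)]

theorem complete_pivoting_residual_le_min_pivot_distance {d n : ℕ}
    (Ω : Set (EuclideanSpace ℝ (Fin d))) (hΩ : IsCompact Ω)
    (K : EuclideanSpace ℝ (Fin d) → EuclideanSpace ℝ (Fin d) → ℝ)
    (hK : IsPSDKernel Ω K) (L : ℝ) (hL : 0 < L)
    (hLip : ∀ x ∈ Ω, ∀ y ∈ Ω, |K x x - K x y| ≤ L * ‖x - y‖)
    (z : Fin n → EuclideanSpace ℝ (Fin d)) (hzΩ : ∀ i, z i ∈ Ω)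
    -- well-definedness: each selected pivot has a positive diagonal residual
    (hwd : ∀ k : Fin n,
      0 < cholResid K ((List.ofFn z).take k) (z k) (z k))
    -- complete pivoting: `z k` maximizes the diagonal of the current residual over `Ω`
    (hcp : ∀ k : Fin n, ∀ x ∈ Ω,
      cholResid K ((List.ofFn z).take k) x x ≤
        cholResid K ((List.ofFn z).take k) (z k) (z k)) :
    ∀ x ∈ Ω, ∀ y ∈ Ω, ∀ i j : Fin n, i ≠ j →
      |cholResid K (List.ofFn z) x y| ≤ 4 * L * ‖z i - z j‖ :=
  complete_pivoting_residual_le_min_pivot_distance_general Ω K hK L hLip z hzΩ hwd hcp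
end

section
/- Under the hypotheses of the fill-distance theorem (K symmetric PSD with diagonal Lipschitz constant L on compact Ω contained in a ball of radius R), suppose pivots are chosen by δ-complete pivoting with 0 < δ ≤ 1, i.e., R_{i−1}(zᵢ,zᵢ) ≥ δ‖R_{i−1}‖_∞ at each step. Then ‖Rₙ‖_∞ ≤ 8LR/(δ(n^{1/d} − 1)) for n > 1. -/
open Metric MeasureTheory Module Function
open scoped ENNReal

theorem cholResid_append_s10 {E : Type*} (S : E → E → ℝ) (zs ws : List E) :
    cholResid S (zs ++ ws) = cholResid (cholResid S zs) ws :=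
  List.foldl_append

namespace IsPSDKernel

variable {E : Type*} {Ω : Set E} {S : E → E → ℝ}

theorem diag_nonneg (hS : IsPSDKernel Ω S) {x : E} (hx : x ∈ Ω) : 0 ≤ S x x := by
  simpa using hS.2 1 (fun _ => x) (fun _ => hx) (fun _ => 1)

theorem quadForm_add_nonneg (hS : IsPSDKernel Ω S) {m : ℕ} {p : Fin m → E}
    (hp : ∀ i, p i ∈ Ω) {z : E} (hz : z ∈ Ω) (c : Fin m → ℝ) (t : ℝ) :
    0 ≤ ∑ i, ∑ j, c i * c j * S (p i) (p j) + 2 * t * ∑ i, c i * S (p i) z + t ^ 2 * S z z := by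
  have h := hS.2 (m + 1) (Fin.snoc p z) (Fin.lastCases (by simpa using hz) (by simpa using hp))
    (Fin.snoc c t)
  simp only [Fin.sum_univ_castSucc, Fin.snoc_castSucc, Fin.snoc_last, Finset.sum_add_distrib,
    fun i => hS.1 z hz (p i) (hp i)] at h
  have hcross : ∑ i, t * c i * S (p i) z + ∑ i, c i * t * S (p i) z
      = 2 * t * ∑ i, c i * S (p i) z := by
    rw [← Finset.sum_add_distrib, Finset.mul_sum]
    exact Finset.sum_congr rfl fun i _ => by ring
  linarith

theorem sq_le_mul_diag (hS : IsPSDKernel Ω S) {x z : E} (hx : x ∈ Ω) (hz : z ∈ Ω) :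
    S x z ^ 2 ≤ S x x * S z z := by
  have h := discrim_le_zero (a := S z z) (b := 2 * S x z) (c := S x x) fun t => by
    have := hS.quadForm_add_nonneg (p := ![x]) (by simpa using hx) hz ![1] t
    simp only [Finset.univ_unique, Fin.default_eq_zero, Matrix.cons_val_fin_one,
      Finset.sum_singleton] at this
    linarith
  rw [discrim] at h
  linarith

theorem abs_le_of_diag_le (hS : IsPSDKernel Ω S) {x y : E} (hx : x ∈ Ω) (hy : y ∈ Ω) {B : ℝ}
    (hxB : S x x ≤ B) (hyB : S y y ≤ B) : |S x y| ≤ B := by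
  have hB : 0 ≤ B := (hS.diag_nonneg hx).trans hxB
  refine abs_le_of_sq_le_sq ((hS.sq_le_mul_diag hx hy).trans ?_) hB
  rw [sq]
  exact mul_le_mul hxB hyB (hS.diag_nonneg hy) hB

theorem cholStep (hS : IsPSDKernel Ω S) {z : E} (hz : z ∈ Ω) :
    IsPSDKernel Ω (cholStep S z) := by
  refine ⟨fun x hx y hy => ?_, fun m p hp c => ?_⟩
  · simp only [_root_.cholStep]
    rw [hS.1 x hx y hy, hS.1 x hx z hz, hS.1 z hz y hy]
    ring
  set A := ∑ i, c i * S (p i) z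
  have hQ : ∑ i, ∑ j, c i * c j * _root_.cholStep S z (p i) (p j)
      = ∑ i, ∑ j, c i * c j * S (p i) (p j) - A ^ 2 / S z z := by
    simp only [_root_.cholStep, mul_sub, Finset.sum_sub_distrib, A, sq, Finset.sum_mul_sum,
      Finset.sum_div]
    congr 1
    refine Finset.sum_congr rfl fun i _ => Finset.sum_congr rfl fun j _ => ?_
    rw [hS.1 z hz (p j) (hp j)]
    ring
  -- `t = -A / S z z` minimises the quadratic form of `quadForm_add_nonneg` in `t`
  have hmin := hS.quadForm_add_nonneg hp hz c (-A / S z z)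
  have hval : 2 * (-A / S z z) * A + (-A / S z z) ^ 2 * S z z = -(A ^ 2 / S z z) := by
    rcases eq_or_ne (S z z) 0 with h0 | h0
    · simp [h0]
    · field_simp
      ring
  rw [hQ]
  linarith

theorem cholStep_diag_le (hS : IsPSDKernel Ω S) {x z : E} (hx : x ∈ Ω) (hz : z ∈ Ω) :
    _root_.cholStep S z x x ≤ S x x := by
  have : 0 ≤ S x z * S z x / S z z := by
    rw [← hS.1 x hx z hz]
    exact div_nonneg (mul_self_nonneg _) (hS.diag_nonneg hz)
  simp only [_root_.cholStep]
  linarith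

theorem cholStep_variogram_le (hS : IsPSDKernel Ω S) {x w z : E} (hx : x ∈ Ω) (hw : w ∈ Ω)
    (hz : z ∈ Ω) :
    _root_.cholStep S z x x - 2 * _root_.cholStep S z x w + _root_.cholStep S z w w
      ≤ S x x - 2 * S x w + S w w := by
  have : 0 ≤ (S x z - S w z) ^ 2 / S z z := div_nonneg (sq_nonneg _) (hS.diag_nonneg hz)
  simp only [_root_.cholStep]
  rw [← hS.1 x hx z hz, ← hS.1 w hw z hz]
  linarith [(by ring : (S x z - S w z) ^ 2 / S z z
    = S x z * S x z / S z z - 2 * (S x z * S w z / S z z) + S w z * S w z / S z z)]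

theorem cholStep_diag_le_variogram (hS : IsPSDKernel Ω S) {x z : E} (hx : x ∈ Ω) (hz : z ∈ Ω) :
    _root_.cholStep S z x x ≤ S x x - 2 * S x z + S z z := by
  simp only [_root_.cholStep]
  rw [← hS.1 x hx z hz]
  rcases (hS.diag_nonneg hz).eq_or_lt with h0 | hpos
  · -- the step is then the identity (`x / 0 = 0`), and Cauchy–Schwarz forces `S x z = 0`
    have hsq := hS.sq_le_mul_diag hx hz
    rw [← h0, mul_zero] at hsq
    have : S x z = 0 := pow_eq_zero_iff two_ne_zero |>.1 (le_antisymm hsq (sq_nonneg _))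
    simp [← h0, this]
  · have : 0 ≤ (S x z - S z z) ^ 2 / S z z := by positivity
    have hexpand : (S x z - S z z) ^ 2 / S z z = S x z * S x z / S z z - 2 * S x z + S z z := by
      field_simp
      ring
    linarith

theorem cholResid (hS : IsPSDKernel Ω S) {zs : List E} (hzs : ∀ z ∈ zs, z ∈ Ω) :
    IsPSDKernel Ω (cholResid S zs) := by
  induction zs generalizing S with
  | nil => exact hS
  | cons z zs ih =>
    exact ih (hS.cholStep (hzs z List.mem_cons_self)) fun w hw => hzs w (List.mem_cons_of_mem z hw)

theorem cholResid_diag_le (hS : IsPSDKernel Ω S) {zs : List E} (hzs : ∀ z ∈ zs, z ∈ Ω)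
    {x : E} (hx : x ∈ Ω) : _root_.cholResid S zs x x ≤ S x x := by
  induction zs generalizing S with
  | nil => exact le_rfl
  | cons z zs ih =>
    have hz := hzs z List.mem_cons_self
    exact (ih (hS.cholStep hz) fun w hw => hzs w (List.mem_cons_of_mem z hw)).trans
      (hS.cholStep_diag_le hx hz)

theorem cholResid_variogram_le (hS : IsPSDKernel Ω S) {zs : List E} (hzs : ∀ z ∈ zs, z ∈ Ω)
    {x w : E} (hx : x ∈ Ω) (hw : w ∈ Ω) :
    _root_.cholResid S zs x x - 2 * _root_.cholResid S zs x w + _root_.cholResid S zs w w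
      ≤ S x x - 2 * S x w + S w w := by
  induction zs generalizing S with
  | nil => exact le_rfl
  | cons z zs ih =>
    have hz := hzs z List.mem_cons_self
    exact (ih (hS.cholStep hz) fun w hw => hzs w (List.mem_cons_of_mem z hw)).trans
      (hS.cholStep_variogram_le hx hw hz)

theorem cholResid_diag_le_of_prefix (hS : IsPSDKernel Ω S) {zs ws : List E} (h : zs <+: ws)
    (hws : ∀ w ∈ ws, w ∈ Ω) {x : E} (hx : x ∈ Ω) :
    _root_.cholResid S ws x x ≤ _root_.cholResid S zs x x := by
  obtain ⟨rest, rfl⟩ := h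
  rw [cholResid_append_s10]
  exact (hS.cholResid fun w hw => hws w (List.mem_append_left rest hw)).cholResid_diag_le
    (fun w hw => hws w (List.mem_append_right zs hw)) hx

theorem cholResid_diag_le_variogram (hS : IsPSDKernel Ω S) {zs ws : List E} {z : E}
    (h : zs ++ [z] <+: ws) (hws : ∀ w ∈ ws, w ∈ Ω) {x : E} (hx : x ∈ Ω) (hz : z ∈ Ω) :
    _root_.cholResid S ws x x ≤ S x x - 2 * S x z + S z z := by
  have hzs : ∀ w ∈ zs, w ∈ Ω := fun w hw => hws w (h.subset (List.mem_append_left _ hw))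
  calc _root_.cholResid S ws x x ≤ _root_.cholResid S (zs ++ [z]) x x :=
        hS.cholResid_diag_le_of_prefix h hws hx
    _ = _root_.cholStep (_root_.cholResid S zs) z x x := by rw [cholResid_append_s10]; rfl
    _ ≤ _ := (hS.cholResid hzs).cholStep_diag_le_variogram hx hz
    _ ≤ S x x - 2 * S x z + S z z := hS.cholResid_variogram_le hzs hx hz

end IsPSDKernel

theorem variogram_le_of_abs_diag_sub_le {E : Type*} [SeminormedAddCommGroup E] {Ω : Set E}
    {K : E → E → ℝ} (hsym : ∀ x ∈ Ω, ∀ y ∈ Ω, K x y = K y x) {L : ℝ}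
    (hLip : ∀ x ∈ Ω, ∀ y ∈ Ω, |K x x - K x y| ≤ L * ‖x - y‖) {x y : E} (hx : x ∈ Ω)
    (hy : y ∈ Ω) : K x x - 2 * K x y + K y y ≤ 2 * L * ‖x - y‖ := by
  have hxy := (abs_le.1 (hLip x hx y hy)).2
  have hyx := (abs_le.1 (hLip y hy x hx)).2
  rw [hsym y hy x hx, norm_sub_rev] at hyx
  linarith

theorem IsPSDKernel.cholResid_take_diag_le_of_lt {E : Type*} [SeminormedAddCommGroup E]
    {Ω : Set E} {K : E → E → ℝ} (hK : IsPSDKernel Ω K) {L : ℝ}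
    (hLip : ∀ x ∈ Ω, ∀ y ∈ Ω, |K x x - K x y| ≤ L * ‖x - y‖) {n : ℕ} {z : Fin n → E}
    (hz : ∀ i, z i ∈ Ω) {i k : Fin n} (hik : i < k) :
    _root_.cholResid K ((List.ofFn z).take k) (z k) (z k) ≤ 2 * L * ‖z k - z i‖ := by
  have hprefix : (List.ofFn z).take i ++ [z i] <+: (List.ofFn z).take k := by
    have hconcat := List.take_concat_get' (List.ofFn z) i (by simp)
    rw [List.getElem_ofFn] at hconcat
    exact hconcat ▸ List.take_prefix_take_left hik
  have htake : ∀ w ∈ (List.ofFn z).take k, w ∈ Ω := fun w hw => by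
    obtain ⟨j, rfl⟩ := List.mem_ofFn.1 (List.mem_of_mem_take hw)
    exact hz j
  exact (hK.cholResid_diag_le_variogram hprefix htake (hz k) (hz i)).trans
    (variogram_le_of_abs_diag_sub_le hK.1 hLip (hz k) (hz i))

section Packing

variable {E : Type*} [NormedAddCommGroup E] [NormedSpace ℝ E] [FiniteDimensional ℝ E]
  [MeasurableSpace E] [BorelSpace E] [Nontrivial E]

theorem card_mul_pow_le_of_pairwise_le_dist {ι : Type*} [Fintype ι] {c : E} {R h : ℝ}
    (hR : 0 ≤ R) (hh : 0 ≤ h) {z : ι → E} (hz : ∀ i, z i ∈ closedBall c R)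
    (hsep : Pairwise fun i j => h ≤ dist (z i) (z j)) :
    (Fintype.card ι : ℝ) * (h / 2) ^ finrank ℝ E ≤ (R + h / 2) ^ finrank ℝ E := by
  set μ : Measure E := Measure.addHaar
  set V := μ (ball 0 1)
  have hdisj : Pairwise (Disjoint on fun i => ball (z i) (h / 2)) := fun i j hij =>
    ball_disjoint_ball (by linarith [hsep hij])
  have hsub : ⋃ i, ball (z i) (h / 2) ⊆ ball c (R + h / 2) := Set.iUnion_subset fun i x hx => by
    rw [mem_ball] at hx ⊢
    linarith [dist_triangle x (z i) c, mem_closedBall.1 (hz i)]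
  have hvol : (Fintype.card ι : ℝ≥0∞) * ENNReal.ofReal ((h / 2) ^ finrank ℝ E) * V
      ≤ ENNReal.ofReal ((R + h / 2) ^ finrank ℝ E) * V :=
    calc (Fintype.card ι : ℝ≥0∞) * ENNReal.ofReal ((h / 2) ^ finrank ℝ E) * V
        = ∑ i, μ (ball (z i) (h / 2)) := by
          simp only [fun i => μ.addHaar_ball (z i) (r := h / 2) (by positivity), Finset.sum_const,
            Finset.card_univ, nsmul_eq_mul, mul_assoc, V]
      _ = μ (⋃ i, ball (z i) (h / 2)) := by
          rw [measure_iUnion hdisj fun _ => measurableSet_ball, tsum_fintype]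
      _ ≤ μ (ball c (R + h / 2)) := measure_mono hsub
      _ = ENNReal.ofReal ((R + h / 2) ^ finrank ℝ E) * V := μ.addHaar_ball _ (by positivity)
  rw [ENNReal.mul_le_mul_iff_left (measure_ball_pos μ _ one_pos).ne' measure_ball_lt_top.ne,
    ← ENNReal.ofReal_natCast, ← ENNReal.ofReal_mul (Nat.cast_nonneg _),
    ENNReal.ofReal_le_ofReal_iff (by positivity)] at hvol
  exact hvol

theorem exists_lt_dist_le_of_one_lt_card {ι : Type*} [Fintype ι] [LinearOrder ι]
    (hcard : 1 < Fintype.card ι) {c : E} {R : ℝ} {z : ι → E} (hz : ∀ i, z i ∈ closedBall c R) :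
    ∃ i j, i < j ∧ dist (z i) (z j)
      ≤ 2 * R / ((Fintype.card ι : ℝ) ^ (1 / (finrank ℝ E : ℝ)) - 1) := by
  have hpairs : (Finset.univ.filter fun p : ι × ι => p.1 < p.2).Nonempty := by
    obtain ⟨a, b, hab⟩ := Fintype.one_lt_card_iff_nontrivial.1 hcard |>.exists_pair_ne
    rcases hab.lt_or_gt with h | h
    · exact ⟨(a, b), by simpa using h⟩
    · exact ⟨(b, a), by simpa using h⟩
  obtain ⟨⟨i, j⟩, hij, hmin⟩ := Finset.exists_min_image _ (fun p => dist (z p.1) (z p.2)) hpairs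
  refine ⟨i, j, (Finset.mem_filter.1 hij).2, ?_⟩
  set h := dist (z i) (z j)
  have hsep : Pairwise fun a b => h ≤ dist (z a) (z b) := fun a b hab => by
    rcases hab.lt_or_gt with hlt | hlt
    · exact hmin (a, b) (by simpa using hlt)
    · rw [dist_comm]
      exact hmin (b, a) (by simpa using hlt)
  have hR : 0 ≤ R := dist_nonneg.trans (hz i)
  set d := finrank ℝ E
  set n := (Fintype.card ι : ℝ)
  have hd : d ≠ 0 := Module.finrank_pos.ne'
  have hroot : n ^ (1 / (d : ℝ)) * (h / 2) ≤ R + h / 2 := by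
    refine (pow_le_pow_iff_left₀ (by positivity) (by positivity) hd).1 ?_
    rw [mul_pow, one_div, Real.rpow_inv_natCast_pow (Nat.cast_nonneg _) hd]
    exact card_mul_pow_le_of_pairwise_le_dist hR dist_nonneg hz hsep
  have ht : 0 < n ^ (1 / (d : ℝ)) - 1 :=
    sub_pos.2 (Real.one_lt_rpow (by simpa [n] using hcard) (by positivity))
  rw [le_div_iff₀ ht]
  linarith

end Packing

theorem delta_complete_pivoting_convergence_general {d n : ℕ} (hd : 0 < d) (hn : 1 < n)
    (Ω : Set (EuclideanSpace ℝ (Fin d))) (δ : ℝ) (hδ0 : 0 < δ)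
    (c : EuclideanSpace ℝ (Fin d)) (R : ℝ) (hball : Ω ⊆ Metric.closedBall c R)
    (K : EuclideanSpace ℝ (Fin d) → EuclideanSpace ℝ (Fin d) → ℝ)
    (hK : IsPSDKernel Ω K) (L : ℝ) (hL : 0 < L)
    (hLip : ∀ x ∈ Ω, ∀ y ∈ Ω, |K x x - K x y| ≤ L * ‖x - y‖)
    (z : Fin n → EuclideanSpace ℝ (Fin d)) (hzΩ : ∀ i, z i ∈ Ω)
    -- δ-complete pivoting: the diagonal residual at `z k` is at least a δ-fraction of
    -- the sup-norm of the current residual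
    (hcp : ∀ k : Fin n, ∀ x ∈ Ω, ∀ y ∈ Ω,
      δ * |cholResid K ((List.ofFn z).take k) x y| ≤
        cholResid K ((List.ofFn z).take k) (z k) (z k)) :
    ∀ x ∈ Ω, ∀ y ∈ Ω,
      |cholResid K (List.ofFn z) x y| ≤
        8 * L * R / (δ * ((n : ℝ) ^ ((1 : ℝ) / (d : ℝ)) - 1)) := by
  intro x hx y hy
  have : Nontrivial (EuclideanSpace ℝ (Fin d)) :=
    nontrivial_of_finrank_pos (by rwa [finrank_euclideanSpace_fin])
  set t := (n : ℝ) ^ ((1 : ℝ) / (d : ℝ)) - 1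
  have ht : 0 < t := sub_pos.2 (Real.one_lt_rpow (by exact_mod_cast hn) (by positivity))
  have hzs : ∀ w ∈ List.ofFn z, w ∈ Ω := by simpa [List.mem_ofFn] using hzΩ
  obtain ⟨i, k, hik, hdist⟩ := exists_lt_dist_le_of_one_lt_card (by simpa using hn)
    fun j => hball (hzΩ j)
  rw [Fintype.card_fin, finrank_euclideanSpace_fin, dist_eq_norm, norm_sub_rev] at hdist
  have hR : 0 ≤ R := dist_nonneg.trans (hball (hzΩ i))
  have hpivot : cholResid K ((List.ofFn z).take k) (z k) (z k) ≤ 4 * L * R / t :=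
    calc _ ≤ 2 * L * ‖z k - z i‖ := hK.cholResid_take_diag_le_of_lt hLip hzΩ hik
      _ ≤ 2 * L * (2 * R / t) := by gcongr
      _ = 4 * L * R / t := by ring
  have hdiag : ∀ w ∈ Ω, cholResid K (List.ofFn z) w w ≤ 4 * L * R / (δ * t) := by
    intro w hw
    have hcpw := hcp k w hw w hw
    rw [abs_of_nonneg ((hK.cholResid fun v hv => hzs v (List.mem_of_mem_take hv)).diag_nonneg hw)]
      at hcpw
    have hmono := hK.cholResid_diag_le_of_prefix (List.take_prefix k _) hzs hw
    rw [mul_comm δ, ← div_div, le_div_iff₀' hδ0]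
    exact (mul_le_mul_of_nonneg_left hmono hδ0.le).trans (hcpw.trans hpivot)
  calc |cholResid K (List.ofFn z) x y| ≤ 4 * L * R / (δ * t) :=
        (hK.cholResid hzs).abs_le_of_diag_le hx hy (hdiag x hx) (hdiag y hy)
    _ ≤ 8 * L * R / (δ * t) := by gcongr; linarith

theorem delta_complete_pivoting_convergence {d n : ℕ} (hd : 0 < d) (hn : 1 < n)
    (Ω : Set (EuclideanSpace ℝ (Fin d))) (hΩ : IsCompact Ω) (δ : ℝ) (hδ0 : 0 < δ) (hδ1 : δ ≤ 1)
    (c : EuclideanSpace ℝ (Fin d)) (R : ℝ) (hball : Ω ⊆ Metric.closedBall c R)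
    (K : EuclideanSpace ℝ (Fin d) → EuclideanSpace ℝ (Fin d) → ℝ)
    (hK : IsPSDKernel Ω K) (L : ℝ) (hL : 0 < L)
    (hLip : ∀ x ∈ Ω, ∀ y ∈ Ω, |K x x - K x y| ≤ L * ‖x - y‖)
    (z : Fin n → EuclideanSpace ℝ (Fin d)) (hzΩ : ∀ i, z i ∈ Ω)
    -- well-definedness: each selected pivot has a positive diagonal residual
    (hwd : ∀ k : Fin n,
      0 < cholResid K ((List.ofFn z).take k) (z k) (z k))
    -- δ-complete pivoting: the diagonal residual at `z k` is at least a δ-fraction of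
    -- the sup-norm of the current residual
    (hcp : ∀ k : Fin n, ∀ x ∈ Ω, ∀ y ∈ Ω,
      δ * |cholResid K ((List.ofFn z).take k) x y| ≤
        cholResid K ((List.ofFn z).take k) (z k) (z k)) :
    ∀ x ∈ Ω, ∀ y ∈ Ω,
      |cholResid K (List.ofFn z) x y| ≤
        8 * L * R / (δ * ((n : ℝ) ^ ((1 : ℝ) / (d : ℝ)) - 1)) :=
  delta_complete_pivoting_convergence_general hd hn Ω δ hδ0 c R hball K hK L hL hLip z hzΩ hcp
end
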